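/- arXiv:2108.11683 — 2 statements merged into one kernel-verified Lean document; each statement's English description precedes it below -/
import Mathlib

section
/- Let H be a real separable Hilbert space and γ₁, γ₂ > 0 fixed. For A, B ∈ Sym⁺(H) ∩ HS(H) define D(A,B) := ( ‖log(I + A/γ₁) − log(I + B/γ₂)‖²_HS + (log γ₁ − log γ₂)² )^{1/2} (this equals the extended Hilbert–Schmidt norm ‖log(γ₁I + A) − log(γ₂I + B)‖_eHS). Then for all A, B, A', B' ∈ Sym⁺(H) ∩ HS(H): |D(A',B') − D(A,B)| ≤ (1/γ₁)‖A' − A‖_HS + (1/γ₂)‖B' − B‖_HS. -/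
set_option maxHeartbeats 1000000
set_option synthInstance.maxHeartbeats 200000
set_option linter.unusedSectionVars false


open scoped RealInnerProductSpace
open MeasureTheory Filter

noncomputable section

variable {H : Type*} [NormedAddCommGroup H] [InnerProductSpace ℝ H] [CompleteSpace H]

/-- Operator logarithm: for a bounded self-adjoint positive definite operator `T` this agrees
with the logarithm given by the continuous functional (spectral) calculus; it is defined via the
integral formula `log T = ∫₀¹ (T − I)(I + t(T − I))⁻¹ dt`. -/
noncomputable def opLog (T : H →L[ℝ] H) : H →L[ℝ] H :=
  ∫ t in (0:ℝ)..1, (T - 1) * Ring.inverse (1 + t • (T - 1))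

/-- Real powers of an operator: `T ^ r = exp (r · log T)`, agreeing with the continuous
functional (spectral) calculus powers for self-adjoint positive definite `T`. -/
noncomputable def opPow (T : H →L[ℝ] H) (r : ℝ) : H →L[ℝ] H :=
  NormedSpace.exp (r • opLog T)

variable {E F : Type*} [NormedAddCommGroup E] [InnerProductSpace ℝ E]
  [NormedAddCommGroup F] [InnerProductSpace ℝ F]

/-- `T : E →L[ℝ] F` is a Hilbert–Schmidt operator, expressed w.r.t. the Hilbert basis `e`
of `E` (the notion is independent of the choice of basis). -/
def IsHS {ι : Type*} (e : HilbertBasis ι ℝ E) (T : E →L[ℝ] F) : Prop :=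
  Summable fun i => ‖T (e i)‖ ^ 2

/-- The Hilbert–Schmidt norm of `T`, computed w.r.t. the Hilbert basis `e` of the domain. -/
noncomputable def hsNorm {ι : Type*} (e : HilbertBasis ι ℝ E) (T : E →L[ℝ] F) : ℝ :=
  Real.sqrt (∑' i, ‖T (e i)‖ ^ 2)

/-- The Log-Hilbert–Schmidt distance `D(A,B) = ‖log(γ₁I + A) − log(γ₂I + B)‖_eHS`, via the
decomposition `log(γI + A) = log(I + A/γ) + (log γ)I` and the extended Hilbert–Schmidt norm
`‖X + cI‖²_eHS = ‖X‖²_HS + c²`. -/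
noncomputable def DLogE {ι : Type*} (e : HilbertBasis ι ℝ H) (γ₁ γ₂ : ℝ)
    (A B : H →L[ℝ] H) : ℝ :=
  Real.sqrt (hsNorm e (opLog (1 + γ₁⁻¹ • A) - opLog (1 + γ₂⁻¹ • B)) ^ 2 +
    (Real.log γ₁ - Real.log γ₂) ^ 2)

/-! ### Auxiliary lemmas -/

section Aux

lemma aux_sa_one : IsSelfAdjoint (1 : H →L[ℝ] H) := by
  rw [ContinuousLinearMap.isSelfAdjoint_iff_isSymmetric]
  intro x y
  simp

lemma aux_sa_smul (c : ℝ) {Z : H →L[ℝ] H} (hZ : IsSelfAdjoint Z) :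
    IsSelfAdjoint (c • Z) := by
  rw [ContinuousLinearMap.isSelfAdjoint_iff_isSymmetric] at hZ ⊢
  intro x y
  simp only [ContinuousLinearMap.coe_smul, LinearMap.smul_apply]
  rw [real_inner_smul_left, real_inner_smul_right, hZ x y]

/-- A coercive self-adjoint-style operator (coercivity alone suffices via Lax–Milgram)
is a unit of the ring of continuous linear maps. -/
lemma aux_isUnit (S : H →L[ℝ] H) (hS : ∀ x : H, ‖x‖ ^ 2 ≤ ⟪x, S x⟫) : IsUnit S := by
  have hB : IsCoercive ((innerSL ℝ).comp S) := by
    refine ⟨1, one_pos, fun u => ?_⟩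
    have := hS u
    simp only [ContinuousLinearMap.comp_apply, innerSL_apply_apply, one_mul]
    calc ‖u‖ * ‖u‖ = ‖u‖ ^ 2 := by ring
      _ ≤ ⟪u, S u⟫ := hS u
      _ = ⟪S u, u⟫ := real_inner_comm _ _
  set E := hB.continuousLinearEquivOfBilin with hE
  have hSE : ∀ v : H, S v = E v := by
    intro v
    exact hB.unique_continuousLinearEquivOfBilin (fun w => rfl)
  refine ⟨⟨S, (E.symm : H →L[ℝ] H), ?_, ?_⟩, rfl⟩
  · ext x
    simp [ContinuousLinearMap.mul_apply, hSE]
  · ext x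
    simp [ContinuousLinearMap.mul_apply, hSE]

/-- The inverse of a coercive (with constant 1) operator is a contraction. -/
lemma aux_inv_contr (S : H →L[ℝ] H) (hS : ∀ x : H, ‖x‖ ^ 2 ≤ ⟪x, S x⟫) (x : H) :
    ‖Ring.inverse S x‖ ≤ ‖x‖ := by
  have hU : IsUnit S := aux_isUnit S hS
  set y := Ring.inverse S x with hy
  have hSy : S y = x := by
    have h1 : S * Ring.inverse S = 1 := Ring.mul_inverse_cancel _ hU
    calc S y = (S * Ring.inverse S) x := rfl
      _ = x := by rw [h1]; rfl
  have h1 : ‖y‖ ^ 2 ≤ ⟪y, x⟫ := by rw [← hSy]; exact hS y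
  have h2 : ⟪y, x⟫ ≤ ‖y‖ * ‖x‖ := real_inner_le_norm y x
  rcases eq_or_lt_of_le (norm_nonneg y) with h0 | h0
  · rw [← h0]; exact norm_nonneg x
  · have : ‖y‖ * ‖y‖ ≤ ‖y‖ * ‖x‖ := by nlinarith
    exact le_of_mul_le_mul_left this h0

/-- The `Ring.inverse` of a self-adjoint unit is self-adjoint. -/
lemma aux_inv_sa (S : H →L[ℝ] H) (hU : IsUnit S) (hsa : IsSelfAdjoint S) :
    IsSelfAdjoint (Ring.inverse S) := by
  set R := Ring.inverse S with hR
  have h1 : S * R = 1 := Ring.mul_inverse_cancel _ hU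
  have h2 : R * S = 1 := Ring.inverse_mul_cancel _ hU
  have h3 : star R * S = 1 := by
    have := congrArg star h1
    rwa [star_mul, star_one, hsa.star_eq] at this
  calc star R = star R * (S * R) := by rw [h1, mul_one]
    _ = (star R * S) * R := by rw [mul_assoc]
    _ = R := by rw [h3, one_mul]

/-- Parseval for a Hilbert basis, squared-inner form. -/
lemma aux_hasSum_inner_sq {ι : Type*} (e : HilbertBasis ι ℝ H) (x : H) :
    HasSum (fun i => ⟪e i, x⟫ ^ 2) (‖x‖ ^ 2) := by
  have h := e.hasSum_inner_mul_inner x x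
  rw [real_inner_self_eq_norm_sq] at h
  have hfun : (fun i => ⟪e i, x⟫ ^ 2) = fun i => ⟪x, e i⟫ * ⟪e i, x⟫ := by
    funext i; rw [sq, real_inner_comm x (e i)]
  rw [hfun]; exact h

lemma aux_sum_inner_sq_le {ι : Type*} (e : HilbertBasis ι ℝ H) (x : H) (s : Finset ι) :
    ∑ i ∈ s, ⟪e i, x⟫ ^ 2 ≤ ‖x‖ ^ 2 :=
  sum_le_hasSum s (fun _ _ => sq_nonneg _) (aux_hasSum_inner_sq e x)

/-- Key finite-sum bound: composing on the right with a self-adjoint contraction does not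
increase Hilbert–Schmidt sums. -/
lemma aux_right_sum_le {ι : Type*} (e : HilbertBasis ι ℝ H) (T V : H →L[ℝ] H)
    (hT : IsSelfAdjoint T) (hV : IsSelfAdjoint V) (hVc : ∀ x : H, ‖V x‖ ≤ ‖x‖)
    (hTs : Summable fun i => ‖T (e i)‖ ^ 2) (s : Finset ι) :
    ∑ i ∈ s, ‖T (V (e i))‖ ^ 2 ≤ ∑' i, ‖T (e i)‖ ^ 2 := by
  have hstep : ∀ i : ι, ‖T (V (e i))‖ ^ 2 = ∑' j, ⟪e j, T (V (e i))⟫ ^ 2 := fun i =>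
    (aux_hasSum_inner_sq e (T (V (e i)))).tsum_eq.symm
  have hswap : ∑ i ∈ s, ‖T (V (e i))‖ ^ 2
      = ∑' j, ∑ i ∈ s, ⟪e j, T (V (e i))⟫ ^ 2 := by
    rw [Summable.tsum_finsetSum (fun i _ => (aux_hasSum_inner_sq e (T (V (e i)))).summable)]
    exact Finset.sum_congr rfl fun i _ => hstep i
  rw [hswap]
  refine Summable.tsum_le_tsum (fun j => ?_)
    (summable_sum fun i _ => (aux_hasSum_inner_sq e (T (V (e i)))).summable) hTs
  have hinner : ∀ i : ι, ⟪e j, T (V (e i))⟫ = ⟪e i, V (T (e j))⟫ := by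
    intro i
    calc ⟪e j, T (V (e i))⟫ = ⟪T (e j), V (e i)⟫ := (hT.isSymmetric (e j) (V (e i))).symm
      _ = ⟪V (T (e j)), e i⟫ := (hV.isSymmetric (T (e j)) (e i)).symm
      _ = ⟪e i, V (T (e j))⟫ := real_inner_comm _ _
  calc ∑ i ∈ s, ⟪e j, T (V (e i))⟫ ^ 2 = ∑ i ∈ s, ⟪e i, V (T (e j))⟫ ^ 2 := by
        exact Finset.sum_congr rfl fun i _ => by rw [hinner i]
    _ ≤ ‖V (T (e j))‖ ^ 2 := aux_sum_inner_sq_le e _ s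
    _ ≤ ‖T (e j)‖ ^ 2 := by
        have := hVc (T (e j))
        exact pow_le_pow_left₀ (norm_nonneg _) this 2

/-- Closure of HS-families under addition. -/
lemma aux_fam_add {ι : Type*} (e : HilbertBasis ι ℝ H) {S T : H →L[ℝ] H}
    (hS : Summable fun i => ‖S (e i)‖ ^ 2) (hT : Summable fun i => ‖T (e i)‖ ^ 2) :
    Summable fun i => ‖(S + T) (e i)‖ ^ 2 := by
  refine Summable.of_nonneg_of_le (fun i => sq_nonneg _) (fun i => ?_)
    ((hS.mul_left 2).add (hT.mul_left 2))
  have h1 : ‖(S + T) (e i)‖ ≤ ‖S (e i)‖ + ‖T (e i)‖ := by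
    rw [ContinuousLinearMap.add_apply]; exact norm_add_le _ _
  have h2 : ‖(S + T) (e i)‖ ^ 2 ≤ (‖S (e i)‖ + ‖T (e i)‖) ^ 2 :=
    pow_le_pow_left₀ (norm_nonneg _) h1 2
  nlinarith [sq_nonneg (‖S (e i)‖ - ‖T (e i)‖)]

lemma aux_fam_neg {ι : Type*} (e : HilbertBasis ι ℝ H) {T : H →L[ℝ] H}
    (hT : Summable fun i => ‖T (e i)‖ ^ 2) :
    Summable fun i => ‖(-T) (e i)‖ ^ 2 := by
  simpa [ContinuousLinearMap.neg_apply] using hT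

lemma aux_fam_smul {ι : Type*} (e : HilbertBasis ι ℝ H) {T : H →L[ℝ] H} (c : ℝ)
    (hT : Summable fun i => ‖T (e i)‖ ^ 2) :
    Summable fun i => ‖(c • T) (e i)‖ ^ 2 := by
  have : ∀ i, ‖(c • T) (e i)‖ ^ 2 = c ^ 2 * ‖T (e i)‖ ^ 2 := by
    intro i
    rw [ContinuousLinearMap.smul_apply, norm_smul, Real.norm_eq_abs, mul_pow, sq_abs]
  exact (summable_congr this).mpr (hT.mul_left (c ^ 2))

lemma aux_hs_nonneg {ι : Type*} (e : HilbertBasis ι ℝ H) (T : H →L[ℝ] H) :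
    0 ≤ hsNorm e T := Real.sqrt_nonneg _

lemma aux_hs_neg {ι : Type*} (e : HilbertBasis ι ℝ H) (T : H →L[ℝ] H) :
    hsNorm e (-T) = hsNorm e T := by
  simp [hsNorm, ContinuousLinearMap.neg_apply]

lemma aux_hs_smul {ι : Type*} (e : HilbertBasis ι ℝ H) (c : ℝ) (T : H →L[ℝ] H) :
    hsNorm e (c • T) = |c| * hsNorm e T := by
  unfold hsNorm
  have h1 : ∀ i, ‖(c • T) (e i)‖ ^ 2 = c ^ 2 * ‖T (e i)‖ ^ 2 := by
    intro i
    rw [ContinuousLinearMap.smul_apply, norm_smul, Real.norm_eq_abs, mul_pow, sq_abs]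
  rw [tsum_congr h1, tsum_mul_left, Real.sqrt_mul (sq_nonneg c), Real.sqrt_sq_eq_abs]

/-- Finite-sum bound implies `hsNorm` bound. -/
lemma aux_hs_le_of_sum_le {ι : Type*} (e : HilbertBasis ι ℝ H) (T : H →L[ℝ] H) {C : ℝ}
    (hC : 0 ≤ C) (h : ∀ s : Finset ι, ∑ i ∈ s, ‖T (e i)‖ ^ 2 ≤ C ^ 2) :
    hsNorm e T ≤ C := by
  have hsum : Summable fun i => ‖T (e i)‖ ^ 2 :=
    summable_of_sum_le (fun i => sq_nonneg _) h
  have hts : ∑' i, ‖T (e i)‖ ^ 2 ≤ C ^ 2 := Summable.tsum_le_of_sum_le hsum h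
  calc hsNorm e T = Real.sqrt (∑' i, ‖T (e i)‖ ^ 2) := rfl
    _ ≤ Real.sqrt (C ^ 2) := Real.sqrt_le_sqrt hts
    _ = C := by rw [Real.sqrt_sq hC]

/-- Triangle inequality for `hsNorm` of summable families. -/
lemma aux_hs_add_le {ι : Type*} (e : HilbertBasis ι ℝ H) {S T : H →L[ℝ] H}
    (hS : Summable fun i => ‖S (e i)‖ ^ 2) (hT : Summable fun i => ‖T (e i)‖ ^ 2) :
    hsNorm e (S + T) ≤ hsNorm e S + hsNorm e T := by
  refine aux_hs_le_of_sum_le e _ (add_nonneg (aux_hs_nonneg e S) (aux_hs_nonneg e T))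
    (fun s => ?_)
  set u : PiLp 2 (fun _ : ↥s => H) := (WithLp.equiv 2 _).symm (fun i => S (e i)) with hu
  set v : PiLp 2 (fun _ : ↥s => H) := (WithLp.equiv 2 _).symm (fun i => T (e i)) with hv
  have hunorm : ‖u‖ ≤ hsNorm e S := by
    have h2 : ‖u‖ ^ 2 = ∑ i ∈ s, ‖S (e i)‖ ^ 2 := by
      rw [PiLp.norm_sq_eq_of_L2]
      exact Finset.sum_coe_sort s (fun i => ‖S (e i)‖ ^ 2)
    have h3 : ‖u‖ ^ 2 ≤ hsNorm e S ^ 2 := by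
      rw [h2]
      have : ∑ i ∈ s, ‖S (e i)‖ ^ 2 ≤ ∑' i, ‖S (e i)‖ ^ 2 :=
        sum_le_hasSum s (fun _ _ => sq_nonneg _) hS.hasSum
      calc ∑ i ∈ s, ‖S (e i)‖ ^ 2 ≤ ∑' i, ‖S (e i)‖ ^ 2 := this
        _ = hsNorm e S ^ 2 := (Real.sq_sqrt (tsum_nonneg fun i => sq_nonneg _)).symm
    have := Real.sqrt_le_sqrt h3
    rwa [Real.sqrt_sq (norm_nonneg _), Real.sqrt_sq (aux_hs_nonneg e S)] at this
  have hvnorm : ‖v‖ ≤ hsNorm e T := by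
    have h2 : ‖v‖ ^ 2 = ∑ i ∈ s, ‖T (e i)‖ ^ 2 := by
      rw [PiLp.norm_sq_eq_of_L2]
      exact Finset.sum_coe_sort s (fun i => ‖T (e i)‖ ^ 2)
    have h3 : ‖v‖ ^ 2 ≤ hsNorm e T ^ 2 := by
      rw [h2]
      have : ∑ i ∈ s, ‖T (e i)‖ ^ 2 ≤ ∑' i, ‖T (e i)‖ ^ 2 :=
        sum_le_hasSum s (fun _ _ => sq_nonneg _) hT.hasSum
      calc ∑ i ∈ s, ‖T (e i)‖ ^ 2 ≤ ∑' i, ‖T (e i)‖ ^ 2 := this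
        _ = hsNorm e T ^ 2 := (Real.sq_sqrt (tsum_nonneg fun i => sq_nonneg _)).symm
    have := Real.sqrt_le_sqrt h3
    rwa [Real.sqrt_sq (norm_nonneg _), Real.sqrt_sq (aux_hs_nonneg e T)] at this
  have hsum_eq : ∑ i ∈ s, ‖(S + T) (e i)‖ ^ 2 = ‖u + v‖ ^ 2 := by
    rw [PiLp.norm_sq_eq_of_L2]
    rw [← Finset.sum_coe_sort s (fun i => ‖(S + T) (e i)‖ ^ 2)]
    refine Finset.sum_congr rfl fun i _ => ?_
    simp [hu, hv, PiLp.add_apply, WithLp.equiv_symm_apply, PiLp.toLp_apply,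
      ContinuousLinearMap.add_apply]
  rw [hsum_eq]
  have h4 : ‖u + v‖ ≤ hsNorm e S + hsNorm e T :=
    (norm_add_le u v).trans (add_le_add hunorm hvnorm)
  exact pow_le_pow_left₀ (norm_nonneg _) h4 2

/-- Coercivity of `1 + t • X` for positive `X` and `t ≥ 0`. -/
lemma aux_coer (X : H →L[ℝ] H) (hpos : ∀ x : H, 0 ≤ ⟪x, X x⟫) {t : ℝ} (ht : 0 ≤ t)
    (x : H) : ‖x‖ ^ 2 ≤ ⟪x, (1 + t • X) x⟫ := by
  have : ⟪x, (1 + t • X) x⟫ = ‖x‖ ^ 2 + t * ⟪x, X x⟫ := by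
    simp [ContinuousLinearMap.add_apply, ContinuousLinearMap.smul_apply,
      inner_add_right, inner_smul_right, real_inner_self_eq_norm_sq]
  rw [this]
  have := mul_nonneg ht (hpos x)
  linarith

/-- The key Lipschitz estimate for `opLog` differences. -/
lemma aux_key {ι : Type*} (e : HilbertBasis ι ℝ H) (X Y : H →L[ℝ] H)
    (hXsa : IsSelfAdjoint X) (hXpos : ∀ x : H, 0 ≤ ⟪x, X x⟫)
    (hYsa : IsSelfAdjoint Y) (hYpos : ∀ x : H, 0 ≤ ⟪x, Y x⟫)
    (hXY : Summable fun i => ‖(X - Y) (e i)‖ ^ 2) :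
    (Summable fun i => ‖((opLog (1 + X) - opLog (1 + Y) : H →L[ℝ] H)) (e i)‖ ^ 2) ∧
      hsNorm e (opLog (1 + X) - opLog (1 + Y)) ≤ hsNorm e (X - Y) := by
  classical
  set T : H →L[ℝ] H := X - Y with hT
  have hTsa : IsSelfAdjoint T := hXsa.sub hYsa
  -- units and inverses
  have hUX : ∀ t ∈ Set.Icc (0:ℝ) 1, IsUnit (1 + t • X) := fun t ht =>
    aux_isUnit _ (aux_coer X hXpos ht.1)
  have hUY : ∀ t ∈ Set.Icc (0:ℝ) 1, IsUnit (1 + t • Y) := fun t ht =>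
    aux_isUnit _ (aux_coer Y hYpos ht.1)
  set f : ℝ → (H →L[ℝ] H) :=
    fun t => Ring.inverse (1 + t • X) * T * Ring.inverse (1 + t • Y) with hf
  -- continuity of inverses
  have hinvcont : ∀ (Z : H →L[ℝ] H), (∀ x : H, 0 ≤ ⟪x, Z x⟫) →
      ContinuousOn (fun t : ℝ => Ring.inverse (1 + t • Z)) (Set.Icc (0:ℝ) 1) := by
    intro Z hZpos t ht
    apply ContinuousAt.continuousWithinAt
    obtain ⟨u, hu⟩ := aux_isUnit _ (aux_coer Z hZpos ht.1)
    have hcont1 : Continuous (fun t : ℝ => (1 + t • Z : H →L[ℝ] H)) :=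
      continuous_const.add (continuous_id.smul continuous_const)
    have h2 : ContinuousAt (fun s : ℝ => (1 + s • Z : H →L[ℝ] H)) t :=
      hcont1.continuousAt
    have h3 : ContinuousAt Ring.inverse ((1 : H →L[ℝ] H) + t • Z) := by
      rw [← hu]; exact NormedRing.inverse_continuousAt u
    have h4 := ContinuousAt.comp (x := t) h3 h2
    exact h4
  have hfX := hinvcont X hXpos
  have hfY := hinvcont Y hYpos
  have hfcont : ContinuousOn f (Set.Icc (0:ℝ) 1) :=
    (hfX.mul continuousOn_const).mul hfY
  have hgXcont : ContinuousOn (fun t : ℝ => X * Ring.inverse (1 + t • X))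
      (Set.Icc (0:ℝ) 1) := continuousOn_const.mul hfX
  have hgYcont : ContinuousOn (fun t : ℝ => Y * Ring.inverse (1 + t • Y))
      (Set.Icc (0:ℝ) 1) := continuousOn_const.mul hfY
  have huIcc : Set.uIcc (0:ℝ) 1 = Set.Icc (0:ℝ) 1 := Set.uIcc_of_le zero_le_one
  have hfint : IntervalIntegrable f MeasureTheory.volume 0 1 :=
    (huIcc ▸ hfcont).intervalIntegrable
  have hgXint : IntervalIntegrable (fun t : ℝ => X * Ring.inverse (1 + t • X))
      MeasureTheory.volume 0 1 := (huIcc ▸ hgXcont).intervalIntegrable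
  have hgYint : IntervalIntegrable (fun t : ℝ => Y * Ring.inverse (1 + t • Y))
      MeasureTheory.volume 0 1 := (huIcc ▸ hgYcont).intervalIntegrable
  -- the difference of logs is the integral of f
  have hcomm : ∀ (Z : H →L[ℝ] H) (t : ℝ), IsUnit (1 + t • Z) →
      Z * Ring.inverse (1 + t • Z) = Ring.inverse (1 + t • Z) * Z := by
    intro Z t hU
    set R := Ring.inverse (1 + t • Z) with hR
    have h1 : R * (1 + t • Z) = 1 := Ring.inverse_mul_cancel _ hU
    have h2 : (1 + t • Z) * R = 1 := Ring.mul_inverse_cancel _ hU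
    have hcz : (1 + t • Z) * Z = Z * (1 + t • Z) := by
      simp [add_mul, mul_add, smul_mul_assoc, mul_smul_comm]
    calc Z * R = (R * (1 + t • Z)) * (Z * R) := by rw [h1, one_mul]
      _ = R * (((1 + t • Z) * Z) * R) := by simp only [mul_assoc]
      _ = R * ((Z * (1 + t • Z)) * R) := by rw [hcz]
      _ = R * Z * ((1 + t • Z) * R) := by simp only [mul_assoc]
      _ = R * Z := by rw [h2, mul_one]
  have hptwise : ∀ t ∈ Set.Icc (0:ℝ) 1,
      X * Ring.inverse (1 + t • X) - Y * Ring.inverse (1 + t • Y) = f t := by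
    intro t ht
    have hux := hUX t ht
    have huy := hUY t ht
    set RX := Ring.inverse (1 + t • X) with hRX
    set RY := Ring.inverse (1 + t • Y) with hRY
    have h1 : RX * (1 + t • X) = 1 := Ring.inverse_mul_cancel _ hux
    have h2 : (1 + t • Y) * RY = 1 := Ring.mul_inverse_cancel _ huy
    have hdiff : X * (1 + t • Y) - (1 + t • X) * Y = T := by
      simp only [hT, mul_add, add_mul, mul_one, one_mul, mul_smul_comm, smul_mul_assoc]
      abel
    have : RX * T * RY = X * RX - Y * RY := by
      calc RX * T * RY = RX * (X * (1 + t • Y) - (1 + t • X) * Y) * RY := by rw [hdiff]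
        _ = RX * (X * (1 + t • Y)) * RY - RX * ((1 + t • X) * Y) * RY := by
            rw [mul_sub, sub_mul]
        _ = RX * X * ((1 + t • Y) * RY) - (RX * (1 + t • X)) * (Y * RY) := by
            simp only [mul_assoc]
        _ = RX * X - Y * RY := by rw [h1, h2, mul_one, one_mul]
        _ = X * RX - Y * RY := by rw [← hcomm X t hux]
    have hft : f t = RX * T * RY := rfl
    rw [hft, this]
  have hlogX : opLog (1 + X) = ∫ t in (0:ℝ)..1, X * Ring.inverse (1 + t • X) := by
    unfold opLog
    simp only [add_sub_cancel_left]
  have hlogY : opLog (1 + Y) = ∫ t in (0:ℝ)..1, Y * Ring.inverse (1 + t • Y) := by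
    unfold opLog
    simp only [add_sub_cancel_left]
  have hrepr : opLog (1 + X) - opLog (1 + Y) = ∫ t in (0:ℝ)..1, f t := by
    rw [hlogX, hlogY, ← intervalIntegral.integral_sub hgXint hgYint]
    refine intervalIntegral.integral_congr ?_
    intro t ht
    rw [huIcc] at ht
    exact hptwise t ht
  set D : H →L[ℝ] H := opLog (1 + X) - opLog (1 + Y) with hD
  set C : ℝ := hsNorm e T with hCdef
  have hC0 : 0 ≤ C := aux_hs_nonneg e T
  have hCsq : C ^ 2 = ∑' i, ‖T (e i)‖ ^ 2 :=
    Real.sq_sqrt (tsum_nonneg fun i => sq_nonneg _)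
  -- the main finite-sum bound
  have hmain : ∀ s : Finset ι, ∑ i ∈ s, ‖D (e i)‖ ^ 2 ≤ C ^ 2 := by
    intro s
    set G : ℝ → PiLp 2 (fun _ : ↥s => H) :=
      fun t => (WithLp.equiv 2 _).symm (fun i : ↥s => f t (e i)) with hG
    have hGcont : ContinuousOn G (Set.Icc (0:ℝ) 1) := by
      have hpi : ContinuousOn (fun t : ℝ => (fun i : ↥s => f t (e i))) (Set.Icc (0:ℝ) 1) := by
        apply continuousOn_pi.mpr
        intro i
        exact hfcont.clm_apply continuousOn_const
      exact (PiLp.continuous_toLp 2 (fun _ : ↥s => H)).comp_continuousOn hpi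
    have hGint : IntervalIntegrable G MeasureTheory.volume 0 1 :=
      (huIcc ▸ hGcont).intervalIntegrable
    -- norm bound on G
    have hGnorm : ∀ t ∈ Set.uIoc (0:ℝ) 1, ‖G t‖ ≤ C := by
      intro t ht
      rw [Set.uIoc_of_le zero_le_one] at ht
      have htIcc : t ∈ Set.Icc (0:ℝ) 1 := ⟨le_of_lt ht.1, ht.2⟩
      have hux := hUX t htIcc
      have huy := hUY t htIcc
      set RX := Ring.inverse (1 + t • X) with hRX
      set RY := Ring.inverse (1 + t • Y) with hRY
      have hRYsa : IsSelfAdjoint RY := by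
        apply aux_inv_sa _ huy
        exact aux_sa_one.add (aux_sa_smul t hYsa)
      have hRYc : ∀ x : H, ‖RY x‖ ≤ ‖x‖ := aux_inv_contr _ (aux_coer Y hYpos htIcc.1)
      have hRXc : ∀ x : H, ‖RX x‖ ≤ ‖x‖ := aux_inv_contr _ (aux_coer X hXpos htIcc.1)
      have hGsq : ‖G t‖ ^ 2 = ∑ i ∈ s, ‖f t (e i)‖ ^ 2 := by
        rw [PiLp.norm_sq_eq_of_L2]
        exact Finset.sum_coe_sort s (fun i => ‖f t (e i)‖ ^ 2)
      have hfapp : ∀ i : ι, f t (e i) = RX (T (RY (e i))) := by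
        intro i
        simp [hf, ContinuousLinearMap.mul_apply]
        rfl
      have hbound : ∑ i ∈ s, ‖f t (e i)‖ ^ 2 ≤ C ^ 2 := by
        rw [hCsq]
        calc ∑ i ∈ s, ‖f t (e i)‖ ^ 2 ≤ ∑ i ∈ s, ‖T (RY (e i))‖ ^ 2 := by
              refine Finset.sum_le_sum fun i _ => ?_
              rw [hfapp i]
              exact pow_le_pow_left₀ (norm_nonneg _) (hRXc _) 2
          _ ≤ ∑' i, ‖T (e i)‖ ^ 2 := aux_right_sum_le e T RY hTsa hRYsa hRYc hXY s
      have h5 : ‖G t‖ ^ 2 ≤ C ^ 2 := by rw [hGsq]; exact hbound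
      have := Real.sqrt_le_sqrt h5
      rwa [Real.sqrt_sq (norm_nonneg _), Real.sqrt_sq hC0] at this
    have hintnorm : ‖∫ t in (0:ℝ)..1, G t‖ ≤ C := by
      have := intervalIntegral.norm_integral_le_of_norm_le_const hGnorm
      simpa using this
    -- identify components of the integral
    haveI : CompleteSpace (PiLp 2 fun _ : ↥s => H) :=
      inferInstance
    have hcomp : ∀ i : ↥s, (∫ t in (0:ℝ)..1, G t) i = D (e i) := by
      intro i
      have h6 : (PiLp.proj 2 (fun _ : ↥s => H) i : PiLp 2 (fun _ : ↥s => H) →L[ℝ] H)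
          (∫ t in (0:ℝ)..1, G t) = ∫ t in (0:ℝ)..1, G t i := by
        rw [← ContinuousLinearMap.intervalIntegral_comp_comm _ hGint]
        rfl
      have h7 : (∫ t in (0:ℝ)..1, G t i) = ∫ t in (0:ℝ)..1, f t (e i) := rfl
      have h8 : D (e i) = ∫ t in (0:ℝ)..1, f t (e i) := by
        rw [hrepr]
        exact ContinuousLinearMap.intervalIntegral_apply hfint (e i)
      rw [h8, ← h7, ← h6]
      rfl
    have hfinal : ∑ i ∈ s, ‖D (e i)‖ ^ 2 = ‖∫ t in (0:ℝ)..1, G t‖ ^ 2 := by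
      rw [PiLp.norm_sq_eq_of_L2]
      rw [← Finset.sum_coe_sort s (fun i => ‖D (e i)‖ ^ 2)]
      exact Finset.sum_congr rfl fun i _ => by rw [hcomp i]
    rw [hfinal]
    exact pow_le_pow_left₀ (norm_nonneg _) hintnorm 2
  constructor
  · exact summable_of_sum_le (fun i => sq_nonneg _) hmain
  · exact aux_hs_le_of_sum_le e D hC0 hmain

/-- Lipschitz property of `x ↦ √(x² + c²)`. -/
lemma aux_sqrt_lip (a b c : ℝ) (ha : 0 ≤ a) (hb : 0 ≤ b) :
    |Real.sqrt (a ^ 2 + c ^ 2) - Real.sqrt (b ^ 2 + c ^ 2)| ≤ |a - b| := by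
  have key : ∀ x y : ℝ, 0 ≤ x → 0 ≤ y →
      Real.sqrt (x ^ 2 + c ^ 2) - Real.sqrt (y ^ 2 + c ^ 2) ≤ |x - y| := by
    intro x y hx hy
    set d := |x - y| with hdd
    have hd : 0 ≤ d := abs_nonneg _
    have hxy : x ≤ y + d := by
      have := le_abs_self (x - y); linarith
    have hsq : Real.sqrt (y ^ 2 + c ^ 2) ^ 2 = y ^ 2 + c ^ 2 := Real.sq_sqrt (by positivity)
    have hyb : y ≤ Real.sqrt (y ^ 2 + c ^ 2) := by
      have h := Real.sqrt_le_sqrt (show y ^ 2 ≤ y ^ 2 + c ^ 2 by nlinarith [sq_nonneg c])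
      rwa [Real.sqrt_sq hy] at h
    have hrhs : 0 ≤ Real.sqrt (y ^ 2 + c ^ 2) + d := by positivity
    have h1 : x ^ 2 + c ^ 2 ≤ (Real.sqrt (y ^ 2 + c ^ 2) + d) ^ 2 := by
      have hx2 : x ^ 2 ≤ (y + d) ^ 2 := by nlinarith
      nlinarith [mul_nonneg hd (sub_nonneg.mpr hyb)]
    have h2 : Real.sqrt (x ^ 2 + c ^ 2) ≤ Real.sqrt (y ^ 2 + c ^ 2) + d := by
      have h3 := Real.sqrt_le_sqrt h1
      rwa [Real.sqrt_sq hrhs] at h3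
    linarith
  rw [abs_sub_le_iff]
  constructor
  · exact key a b ha hb
  · have := key b a hb ha
    rwa [abs_sub_comm] at this

end Aux

/-- Lipschitz estimate for the Log-Hilbert–Schmidt distance. -/
theorem statement3 {ι : Type*} [Countable ι] (e : HilbertBasis ι ℝ H)
    (γ₁ γ₂ : ℝ) (hγ₁ : 0 < γ₁) (hγ₂ : 0 < γ₂) (A B A' B' : H →L[ℝ] H)
    (hAsa : IsSelfAdjoint A) (hApos : ∀ x : H, 0 ≤ ⟪x, A x⟫) (hAHS : IsHS e A)
    (hBsa : IsSelfAdjoint B) (hBpos : ∀ x : H, 0 ≤ ⟪x, B x⟫) (hBHS : IsHS e B)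
    (hA'sa : IsSelfAdjoint A') (hA'pos : ∀ x : H, 0 ≤ ⟪x, A' x⟫) (hA'HS : IsHS e A')
    (hB'sa : IsSelfAdjoint B') (hB'pos : ∀ x : H, 0 ≤ ⟪x, B' x⟫) (hB'HS : IsHS e B') :
    |DLogE e γ₁ γ₂ A' B' - DLogE e γ₁ γ₂ A B| ≤
      (1 / γ₁) * hsNorm e (A' - A) + (1 / γ₂) * hsNorm e (B' - B) := by
  classical
  -- abbreviations
  set L₁ : H →L[ℝ] H := opLog (1 + γ₁⁻¹ • A) with hL₁
  set L₂ : H →L[ℝ] H := opLog (1 + γ₂⁻¹ • B) with hL₂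
  set L₁' : H →L[ℝ] H := opLog (1 + γ₁⁻¹ • A') with hL₁'
  set L₂' : H →L[ℝ] H := opLog (1 + γ₂⁻¹ • B') with hL₂'
  -- self-adjointness and positivity of scaled operators
  have hsmul_sa : ∀ (c : ℝ) (Z : H →L[ℝ] H), IsSelfAdjoint Z → IsSelfAdjoint (c • Z) :=
    fun c Z hZ => aux_sa_smul c hZ
  have hsmul_pos : ∀ (c : ℝ), 0 ≤ c → ∀ (Z : H →L[ℝ] H), (∀ x : H, 0 ≤ ⟪x, Z x⟫) →
      (∀ x : H, 0 ≤ ⟪x, (c • Z) x⟫) := by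
    intro c hc Z hZ x
    rw [ContinuousLinearMap.smul_apply, inner_smul_right]
    exact mul_nonneg hc (hZ x)
  have hγ₁0 : (0:ℝ) ≤ γ₁⁻¹ := le_of_lt (inv_pos.mpr hγ₁)
  have hγ₂0 : (0:ℝ) ≤ γ₂⁻¹ := le_of_lt (inv_pos.mpr hγ₂)
  -- summability of families of differences
  have hfam_sub : ∀ (S T : H →L[ℝ] H), (Summable fun i => ‖S (e i)‖ ^ 2) →
      (Summable fun i => ‖T (e i)‖ ^ 2) → Summable fun i => ‖(S - T) (e i)‖ ^ 2 := by
    intro S T hS hT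
    have := aux_fam_add e hS (aux_fam_neg e hT)
    simpa [sub_eq_add_neg] using this
  have hA'A : Summable fun i => ‖(A' - A) (e i)‖ ^ 2 := hfam_sub _ _ hA'HS hAHS
  have hB'B : Summable fun i => ‖(B' - B) (e i)‖ ^ 2 := hfam_sub _ _ hB'HS hBHS
  -- key estimates
  have key₁ := aux_key e (γ₁⁻¹ • A') (γ₁⁻¹ • A)
    (hsmul_sa _ _ hA'sa) (hsmul_pos _ hγ₁0 _ hA'pos)
    (hsmul_sa _ _ hAsa) (hsmul_pos _ hγ₁0 _ hApos)
    (by rw [← smul_sub]; exact aux_fam_smul e γ₁⁻¹ hA'A)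
  have key₂ := aux_key e (γ₂⁻¹ • B') (γ₂⁻¹ • B)
    (hsmul_sa _ _ hB'sa) (hsmul_pos _ hγ₂0 _ hB'pos)
    (hsmul_sa _ _ hBsa) (hsmul_pos _ hγ₂0 _ hBpos)
    (by rw [← smul_sub]; exact aux_fam_smul e γ₂⁻¹ hB'B)
  have keyM := aux_key e (γ₁⁻¹ • A) (γ₂⁻¹ • B)
    (hsmul_sa _ _ hAsa) (hsmul_pos _ hγ₁0 _ hApos)
    (hsmul_sa _ _ hBsa) (hsmul_pos _ hγ₂0 _ hBpos)
    (hfam_sub _ _ (aux_fam_smul e γ₁⁻¹ hAHS) (aux_fam_smul e γ₂⁻¹ hBHS))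
  have keyM' := aux_key e (γ₁⁻¹ • A') (γ₂⁻¹ • B')
    (hsmul_sa _ _ hA'sa) (hsmul_pos _ hγ₁0 _ hA'pos)
    (hsmul_sa _ _ hB'sa) (hsmul_pos _ hγ₂0 _ hB'pos)
    (hfam_sub _ _ (aux_fam_smul e γ₁⁻¹ hA'HS) (aux_fam_smul e γ₂⁻¹ hB'HS))
  -- names for the log differences
  set D₁ : H →L[ℝ] H := L₁' - L₁ with hD₁
  set D₂ : H →L[ℝ] H := L₂' - L₂ with hD₂
  set M : H →L[ℝ] H := L₁ - L₂ with hM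
  set M' : H →L[ℝ] H := L₁' - L₂' with hM'
  have hD₁sum : Summable fun i => ‖D₁ (e i)‖ ^ 2 := key₁.1
  have hD₂sum : Summable fun i => ‖D₂ (e i)‖ ^ 2 := key₂.1
  have hMsum : Summable fun i => ‖M (e i)‖ ^ 2 := keyM.1
  have hM'sum : Summable fun i => ‖M' (e i)‖ ^ 2 := keyM'.1
  -- bounds on the increments
  have hn₁ : hsNorm e D₁ ≤ γ₁⁻¹ * hsNorm e (A' - A) := by
    have := key₁.2
    rwa [← smul_sub, aux_hs_smul, abs_of_nonneg hγ₁0] at this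
  have hn₂ : hsNorm e D₂ ≤ γ₂⁻¹ * hsNorm e (B' - B) := by
    have := key₂.2
    rwa [← smul_sub, aux_hs_smul, abs_of_nonneg hγ₂0] at this
  set n₁ : ℝ := hsNorm e D₁ with hn₁def
  set n₂ : ℝ := hsNorm e D₂ with hn₂def
  -- triangle estimates between hsNorm of M and M'
  have htri₁ : hsNorm e M' ≤ hsNorm e M + (n₁ + n₂) := by
    have hEq : M' = (M + D₁) + -D₂ := by rw [hM', hM, hD₁, hD₂]; abel
    have h1 : hsNorm e M' ≤ hsNorm e (M + D₁) + hsNorm e (-D₂) := by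
      rw [hEq]
      exact aux_hs_add_le e (aux_fam_add e hMsum hD₁sum) (aux_fam_neg e hD₂sum)
    have h2 : hsNorm e (M + D₁) ≤ hsNorm e M + n₁ := aux_hs_add_le e hMsum hD₁sum
    rw [aux_hs_neg] at h1
    linarith
  have htri₂ : hsNorm e M ≤ hsNorm e M' + (n₁ + n₂) := by
    have hEq : M = (M' + -D₁) + D₂ := by rw [hM', hM, hD₁, hD₂]; abel
    have h1 : hsNorm e M ≤ hsNorm e (M' + -D₁) + hsNorm e D₂ := by
      rw [hEq]
      exact aux_hs_add_le e (aux_fam_add e hM'sum (aux_fam_neg e hD₁sum)) hD₂sum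
    have h2 : hsNorm e (M' + -D₁) ≤ hsNorm e M' + hsNorm e (-D₁) :=
      aux_hs_add_le e hM'sum (aux_fam_neg e hD₁sum)
    rw [aux_hs_neg] at h2
    linarith
  have habs : |hsNorm e M' - hsNorm e M| ≤ n₁ + n₂ := by
    rw [abs_sub_le_iff]
    constructor <;> linarith
  -- put everything together
  have hD : DLogE e γ₁ γ₂ A B = Real.sqrt (hsNorm e M ^ 2 + (Real.log γ₁ - Real.log γ₂) ^ 2) :=
    rfl
  have hD' : DLogE e γ₁ γ₂ A' B'
      = Real.sqrt (hsNorm e M' ^ 2 + (Real.log γ₁ - Real.log γ₂) ^ 2) := rfl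
  have hlip : |DLogE e γ₁ γ₂ A' B' - DLogE e γ₁ γ₂ A B| ≤ |hsNorm e M' - hsNorm e M| := by
    rw [hD, hD']
    exact aux_sqrt_lip _ _ _ (aux_hs_nonneg e M') (aux_hs_nonneg e M)
  calc |DLogE e γ₁ γ₂ A' B' - DLogE e γ₁ γ₂ A B|
      ≤ |hsNorm e M' - hsNorm e M| := hlip
    _ ≤ n₁ + n₂ := habs
    _ ≤ γ₁⁻¹ * hsNorm e (A' - A) + γ₂⁻¹ * hsNorm e (B' - B) := add_le_add hn₁ hn₂
    _ = (1 / γ₁) * hsNorm e (A' - A) + (1 / γ₂) * hsNorm e (B' - B) := by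
        rw [one_div, one_div]
end
end

section
/- Let H be a real separable Hilbert space. Let A, B ∈ HS(H) be such that there exist M_A, M_B > 0 with ⟨x, (I + A)x⟩ ≥ M_A‖x‖² and ⟨x, (I + B)x⟩ ≥ M_B‖x‖² for all x ∈ H, and set Log(I + A) := ∫₀¹ A (I + tA)^{-1} dt, Log(I + B) := ∫₀¹ B (I + tB)^{-1} dt, c_A := sup_{t∈[0,1]} ‖(I + tA)^{-1}‖, c_B := sup_{t∈[0,1]} ‖(I + tB)^{-1}‖. Then | tr[(Log(I + A))²] − tr[(Log(I + B))²] | ≤ c_A c_B ‖A − B‖_HS ( c_A ‖A‖_HS + c_B ‖B‖_HS ). In particular, if A, B ∈ Sym⁺(H) ∩ HS(H), then | tr[(Log(I + A))²] − tr[(Log(I + B))²] | ≤ ‖A − B‖_HS ( ‖A‖_HS + ‖B‖_HS ). -/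
set_option maxHeartbeats 1000000
set_option synthInstance.maxHeartbeats 400000


open scoped RealInnerProductSpace
open MeasureTheory Filter

noncomputable section

variable {H : Type*} [NormedAddCommGroup H] [InnerProductSpace ℝ H] [CompleteSpace H]

variable {E F : Type*} [NormedAddCommGroup E] [InnerProductSpace ℝ E]
  [NormedAddCommGroup F] [InnerProductSpace ℝ F]

/-- The trace of an operator, computed w.r.t. the Hilbert basis `e` (it is the trace when `T`
is trace class, e.g. a product of two Hilbert–Schmidt operators). -/
noncomputable def opTrace {ι : Type*} (e : HilbertBasis ι ℝ E) (T : E →L[ℝ] E) : ℝ :=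
  ∑' i, ⟪e i, T (e i)⟫


section AuxStatement13

set_option linter.unusedSectionVars false

variable {ι : Type*}


/-- Coercive operators are invertible (Lax–Milgram). -/
lemma aux_isUnit_of_coercive {T : H →L[ℝ] H} {m : ℝ} (hm : 0 < m)
    (h : ∀ x : H, m * ‖x‖ ^ 2 ≤ ⟪x, T x⟫) : IsUnit T := by
  have hB : IsCoercive ((innerSL ℝ).comp T) := by
    refine ⟨m, hm, fun u => ?_⟩
    have h1 := h u
    have h2 : ((innerSL ℝ).comp T) u u = ⟪u, T u⟫ := by
      simp [real_inner_comm]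
    rw [h2]
    nlinarith [h u]
  set E := hB.continuousLinearEquivOfBilin with hEdef
  have hE : ∀ v : H, E v = T v := by
    intro v
    refine ext_inner_right ℝ fun w => ?_
    rw [hB.continuousLinearEquivOfBilin_apply]
    simp
  refine isUnit_iff_exists.mpr ⟨(E.symm : H →L[ℝ] H), ?_, ?_⟩
  · ext x
    simp only [ContinuousLinearMap.mul_apply, ContinuousLinearMap.one_apply,
      ContinuousLinearEquiv.coe_coe]
    rw [← hE]
    exact E.apply_symm_apply x
  · ext x
    simp only [ContinuousLinearMap.mul_apply, ContinuousLinearMap.one_apply,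
      ContinuousLinearEquiv.coe_coe]
    rw [← hE]
    exact E.symm_apply_apply x

lemma aux_inverse_apply {T : H →L[ℝ] H} (h : IsUnit T) (y : H) :
    T (Ring.inverse T y) = y := by
  have := Ring.mul_inverse_cancel T h
  calc T (Ring.inverse T y) = (T * Ring.inverse T) y := rfl
  _ = y := by rw [this]; rfl

lemma aux_inverse_norm_le {T : H →L[ℝ] H} {m : ℝ} (hm : 0 < m)
    (h : ∀ x : H, m * ‖x‖ ^ 2 ≤ ⟪x, T x⟫) : ‖Ring.inverse T‖ ≤ m⁻¹ := by
  have hu := aux_isUnit_of_coercive hm h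
  refine ContinuousLinearMap.opNorm_le_bound _ (by positivity) fun y => ?_
  set x := Ring.inverse T y with hx
  have hTx : T x = y := aux_inverse_apply hu y
  have h1 : m * ‖x‖ ^ 2 ≤ ⟪x, T x⟫ := h x
  have h2 : ⟪x, T x⟫ ≤ ‖x‖ * ‖y‖ := by rw [hTx]; exact real_inner_le_norm x y
  rcases eq_or_lt_of_le (norm_nonneg x) with h0 | h0
  · rw [← h0]; positivity
  · rw [inv_mul_eq_div, le_div_iff₀ hm]
    nlinarith

lemma aux_coercive_t {A : H →L[ℝ] H} {MA : ℝ}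
    (hMA : ∀ x : H, MA * ‖x‖ ^ 2 ≤ ⟪x, ((1 : H →L[ℝ] H) + A) x⟫)
    {t : ℝ} (ht : t ∈ Set.Icc (0:ℝ) 1) (x : H) :
    min 1 MA * ‖x‖ ^ 2 ≤ ⟪x, ((1 : H →L[ℝ] H) + t • A) x⟫ := by
  have h1 : ⟪x, ((1 : H →L[ℝ] H) + t • A) x⟫ = ‖x‖ ^ 2 + t * ⟪x, A x⟫ := by
    simp [ContinuousLinearMap.add_apply, ContinuousLinearMap.smul_apply,
      ContinuousLinearMap.one_apply, inner_add_right, real_inner_smul_right,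
      real_inner_self_eq_norm_sq]
  have h2 : ‖x‖ ^ 2 + ⟪x, A x⟫ = ⟪x, ((1 : H →L[ℝ] H) + A) x⟫ := by
    simp [ContinuousLinearMap.add_apply, ContinuousLinearMap.one_apply, inner_add_right,
      real_inner_self_eq_norm_sq]
  have h3 : (MA - 1) * ‖x‖ ^ 2 ≤ ⟪x, A x⟫ := by nlinarith [hMA x]
  obtain ⟨ht0, ht1⟩ := ht
  have h4 : t * ((MA - 1) * ‖x‖ ^ 2) ≤ t * ⟪x, A x⟫ :=
    mul_le_mul_of_nonneg_left h3 ht0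
  rw [h1]
  rcases le_total MA 1 with hM | hM
  · rw [min_eq_right hM]
    have h5 : 0 ≤ (1 - MA) * ((1 - t) * ‖x‖ ^ 2) :=
      mul_nonneg (by linarith) (mul_nonneg (by linarith) (sq_nonneg _))
    nlinarith
  · rw [min_eq_left hM]
    have h5 : 0 ≤ t * ((MA - 1) * ‖x‖ ^ 2) :=
      mul_nonneg ht0 (mul_nonneg (by linarith) (sq_nonneg _))
    linarith

lemma aux_continuousOn_inv {A : H →L[ℝ] H}
    (hunit : ∀ t ∈ Set.Icc (0:ℝ) 1, IsUnit ((1 : H →L[ℝ] H) + t • A)) :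
    ContinuousOn (fun t : ℝ => Ring.inverse ((1 : H →L[ℝ] H) + t • A)) (Set.Icc 0 1) := by
  intro t ht
  have h1 : ContinuousAt (fun t : ℝ => (1 : H →L[ℝ] H) + t • A) t := by fun_prop
  have h2 : ContinuousAt Ring.inverse ((1 : H →L[ℝ] H) + t • A) := by
    have := NormedRing.inverse_continuousAt (hunit t ht).unit
    rwa [IsUnit.unit_spec] at this
  exact (ContinuousAt.comp (f := fun t : ℝ => (1 : H →L[ℝ] H) + t • A) h2 h1).continuousWithinAt

lemma aux_parseval (e : HilbertBasis ι ℝ H) (x : H) :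
    HasSum (fun j => ⟪e j, x⟫ ^ 2) (‖x‖ ^ 2) := by
  have h := e.hasSum_inner_mul_inner x x
  have h2 : ∀ j : ι, ⟪x, e j⟫ * ⟪e j, x⟫ = ⟪e j, x⟫ ^ 2 := fun j => by
    rw [real_inner_comm x (e j), sq]
  have h3 : ⟪x, x⟫ = ‖x‖ ^ 2 := real_inner_self_eq_norm_sq x
  simpa [h2, h3] using h

lemma aux_ehs_adjoint (e : HilbertBasis ι ℝ H) (T : H →L[ℝ] H) :
    ∑' i, ENNReal.ofReal (‖T (e i)‖ ^ 2) =
      ∑' i, ENNReal.ofReal (‖(ContinuousLinearMap.adjoint T) (e i)‖ ^ 2) := by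
  calc ∑' i, ENNReal.ofReal (‖T (e i)‖ ^ 2)
      = ∑' i, ∑' j, ENNReal.ofReal (⟪e j, T (e i)⟫ ^ 2) := by
        refine tsum_congr fun i => ?_
        rw [← (aux_parseval e (T (e i))).tsum_eq,
          ENNReal.ofReal_tsum_of_nonneg (fun j => sq_nonneg _) (aux_parseval e _).summable]
    _ = ∑' j, ∑' i, ENNReal.ofReal (⟪e j, T (e i)⟫ ^ 2) := ENNReal.tsum_comm
    _ = ∑' j, ENNReal.ofReal (‖(ContinuousLinearMap.adjoint T) (e j)‖ ^ 2) := by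
        refine tsum_congr fun j => ?_
        have h : ∀ i : ι, ⟪e j, T (e i)⟫ = ⟪e i, (ContinuousLinearMap.adjoint T) (e j)⟫ :=
          fun i => by rw [← ContinuousLinearMap.adjoint_inner_left]; exact real_inner_comm _ _
        simp_rw [h]
        rw [← ENNReal.ofReal_tsum_of_nonneg (fun i => sq_nonneg _) (aux_parseval e _).summable,
          (aux_parseval e _).tsum_eq]

lemma aux_hs_adjoint (e : HilbertBasis ι ℝ H) {T : H →L[ℝ] H}
    (hT : Summable fun i => ‖T (e i)‖ ^ 2) :
    Summable (fun i => ‖(ContinuousLinearMap.adjoint T) (e i)‖ ^ 2) ∧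
      ∑' i, ‖(ContinuousLinearMap.adjoint T) (e i)‖ ^ 2 = ∑' i, ‖T (e i)‖ ^ 2 := by
  have h := aux_ehs_adjoint e T
  have hofT : ENNReal.ofReal (∑' i, ‖T (e i)‖ ^ 2) = ∑' i, ENNReal.ofReal (‖T (e i)‖ ^ 2) :=
    ENNReal.ofReal_tsum_of_nonneg (fun _ => sq_nonneg _) hT
  have hsum : Summable (fun i => ‖(ContinuousLinearMap.adjoint T) (e i)‖ ^ 2) := by
    refine summable_of_sum_le (c := ∑' i, ‖T (e i)‖ ^ 2) (fun i => sq_nonneg _) fun u => ?_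
    have h1 : ENNReal.ofReal (∑ i ∈ u, ‖(ContinuousLinearMap.adjoint T) (e i)‖ ^ 2)
        ≤ ENNReal.ofReal (∑' i, ‖T (e i)‖ ^ 2) := by
      rw [ENNReal.ofReal_sum_of_nonneg (fun i _ => sq_nonneg _), hofT, h]
      exact ENNReal.sum_le_tsum u
    exact (ENNReal.ofReal_le_ofReal_iff (tsum_nonneg fun _ => sq_nonneg _)).mp h1
  refine ⟨hsum, ?_⟩
  have h2 : ENNReal.ofReal (∑' i, ‖(ContinuousLinearMap.adjoint T) (e i)‖ ^ 2)
      = ENNReal.ofReal (∑' i, ‖T (e i)‖ ^ 2) := by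
    rw [ENNReal.ofReal_tsum_of_nonneg (fun _ => sq_nonneg _) hsum, hofT, h]
  exact (ENNReal.ofReal_eq_ofReal_iff (tsum_nonneg fun _ => sq_nonneg _)
    (tsum_nonneg fun _ => sq_nonneg _)).mp h2

lemma aux_hs_mul_left (e : HilbertBasis ι ℝ H) {T : H →L[ℝ] H}
    (hT : Summable fun i => ‖T (e i)‖ ^ 2) (C : H →L[ℝ] H) :
    Summable (fun i => ‖(C * T) (e i)‖ ^ 2) ∧
      ∑' i, ‖(C * T) (e i)‖ ^ 2 ≤ ‖C‖ ^ 2 * ∑' i, ‖T (e i)‖ ^ 2 := by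
  have hb : ∀ i, ‖(C * T) (e i)‖ ^ 2 ≤ ‖C‖ ^ 2 * ‖T (e i)‖ ^ 2 := fun i => by
    rw [ContinuousLinearMap.mul_apply, ← mul_pow]
    exact pow_le_pow_left₀ (norm_nonneg _) (C.le_opNorm _) 2
  have hsum := Summable.of_nonneg_of_le (fun i => sq_nonneg _) hb (hT.mul_left _)
  exact ⟨hsum, by rw [← tsum_mul_left]; exact Summable.tsum_le_tsum hb hsum (hT.mul_left _)⟩

lemma aux_hs_mul_right (e : HilbertBasis ι ℝ H) {T : H →L[ℝ] H}
    (hT : Summable fun i => ‖T (e i)‖ ^ 2) (D : H →L[ℝ] H) :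
    Summable (fun i => ‖(T * D) (e i)‖ ^ 2) ∧
      ∑' i, ‖(T * D) (e i)‖ ^ 2 ≤ ‖D‖ ^ 2 * ∑' i, ‖T (e i)‖ ^ 2 := by
  obtain ⟨hT', hTeq⟩ := aux_hs_adjoint e hT
  have hadj : ContinuousLinearMap.adjoint (T * D)
      = ContinuousLinearMap.adjoint D * ContinuousLinearMap.adjoint T :=
    ContinuousLinearMap.adjoint_comp T D
  obtain ⟨h1, h2⟩ := aux_hs_mul_left e hT' (ContinuousLinearMap.adjoint D)
  rw [← hadj] at h1 h2
  obtain ⟨h3, h4⟩ := aux_hs_adjoint e h1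
  rw [ContinuousLinearMap.adjoint_adjoint] at h3 h4
  refine ⟨h3, ?_⟩
  rw [h4]
  calc ∑' i, ‖(ContinuousLinearMap.adjoint (T * D)) (e i)‖ ^ 2
      ≤ ‖ContinuousLinearMap.adjoint D‖ ^ 2 *
        ∑' i, ‖(ContinuousLinearMap.adjoint T) (e i)‖ ^ 2 := h2
    _ = ‖D‖ ^ 2 * ∑' i, ‖T (e i)‖ ^ 2 := by
        rw [hTeq, ContinuousLinearMap.adjoint.norm_map]

lemma aux_tsum_cs {f g : ι → ℝ} (hf0 : ∀ i, 0 ≤ f i) (hg0 : ∀ i, 0 ≤ g i)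
    (hf : Summable fun i => f i ^ 2) (hg : Summable fun i => g i ^ 2) :
    Summable (fun i => f i * g i) ∧
      ∑' i, f i * g i ≤ Real.sqrt (∑' i, f i ^ 2) * Real.sqrt (∑' i, g i ^ 2) := by
  have hb : ∀ i, f i * g i ≤ (f i ^ 2 + g i ^ 2) / 2 := fun i => by nlinarith [sq_nonneg (f i - g i)]
  have hsum : Summable (fun i => f i * g i) :=
    Summable.of_nonneg_of_le (fun i => mul_nonneg (hf0 i) (hg0 i)) hb (((hf.add hg)).div_const 2)
  refine ⟨hsum, Summable.tsum_le_of_sum_le hsum fun s => ?_⟩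
  have h1 : (∑ i ∈ s, f i * g i) ^ 2 ≤ (∑ i ∈ s, f i ^ 2) * ∑ i ∈ s, g i ^ 2 :=
    Finset.sum_mul_sq_le_sq_mul_sq s f g
  have h2 : ∑ i ∈ s, f i * g i ≤
      Real.sqrt (∑ i ∈ s, f i ^ 2) * Real.sqrt (∑ i ∈ s, g i ^ 2) := by
    rw [← Real.sqrt_mul (by positivity)]
    calc ∑ i ∈ s, f i * g i ≤ |∑ i ∈ s, f i * g i| := le_abs_self _
      _ = Real.sqrt ((∑ i ∈ s, f i * g i) ^ 2) := (Real.sqrt_sq_eq_abs _).symm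
      _ ≤ Real.sqrt ((∑ i ∈ s, f i ^ 2) * ∑ i ∈ s, g i ^ 2) := Real.sqrt_le_sqrt h1
  refine h2.trans (mul_le_mul ?_ ?_ (Real.sqrt_nonneg _) (Real.sqrt_nonneg _))
  · exact Real.sqrt_le_sqrt (Summable.sum_le_tsum s (fun i _ => sq_nonneg _) hf)
  · exact Real.sqrt_le_sqrt (Summable.sum_le_tsum s (fun i _ => sq_nonneg _) hg)

lemma aux_integral_hs_bound (e : HilbertBasis ι ℝ H) {h : ℝ → H →L[ℝ] H}
    (hcont : ContinuousOn h (Set.Icc 0 1)) {K : ℝ} (hK : 0 ≤ K)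
    (hb : ∀ t ∈ Set.Icc (0:ℝ) 1, ∀ s : Finset ι, ∑ i ∈ s, ‖h t (e i)‖ ^ 2 ≤ K ^ 2) :
    Summable (fun i => ‖(∫ t in (0:ℝ)..1, h t) (e i)‖ ^ 2) ∧
      ∑' i, ‖(∫ t in (0:ℝ)..1, h t) (e i)‖ ^ 2 ≤ K ^ 2 := by
  have hint : IntervalIntegrable h volume 0 1 := by
    apply ContinuousOn.intervalIntegrable; rwa [Set.uIcc_of_le zero_le_one]
  set Δ := ∫ t in (0:ℝ)..1, h t with hΔdef
  have hconti : ∀ x : H, ContinuousOn (fun t => h t x) (Set.Icc 0 1) := fun x =>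
    (ContinuousLinearMap.apply ℝ H x).continuous.comp_continuousOn hcont
  have hinti : ∀ x : H, IntervalIntegrable (fun t => h t x) volume 0 1 := fun x => by
    apply ContinuousOn.intervalIntegrable; rw [Set.uIcc_of_le zero_le_one]; exact hconti x
  have happ : ∀ x : H, Δ x = ∫ t in (0:ℝ)..1, h t x := fun x =>
    ContinuousLinearMap.intervalIntegral_apply hint x
  have key : ∀ s : Finset ι, ∑ i ∈ s, ‖Δ (e i)‖ ^ 2 ≤ K ^ 2 := by
    intro s
    set W := ∑ i ∈ s, ‖Δ (e i)‖ ^ 2 with hWdef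
    have hW0 : 0 ≤ W := Finset.sum_nonneg fun i _ => sq_nonneg _
    have hF : ∀ i : ι, IntervalIntegrable (fun t => ⟪Δ (e i), h t (e i)⟫) volume 0 1 := by
      intro i
      apply ContinuousOn.intervalIntegrable; rw [Set.uIcc_of_le zero_le_one]
      exact continuousOn_const.inner (hconti (e i))
    have hstep : W ≤ Real.sqrt W * K := by
      have hinner : ∀ (i : ι) (y : H), ⟪y, Δ (e i)⟫ = ∫ t in (0:ℝ)..1, ⟪y, h t (e i)⟫ := by
        intro i y
        rw [happ (e i)]
        have := ContinuousLinearMap.intervalIntegral_comp_comm (innerSL ℝ y) (hinti (e i))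
        simpa using this.symm
      have hintsum : W = ∫ t in (0:ℝ)..1, ∑ i ∈ s, ⟪Δ (e i), h t (e i)⟫ := by
        calc W = ∑ i ∈ s, ⟪Δ (e i), Δ (e i)⟫ :=
              Finset.sum_congr rfl fun i _ => (real_inner_self_eq_norm_sq _).symm
          _ = ∑ i ∈ s, ∫ t in (0:ℝ)..1, ⟪Δ (e i), h t (e i)⟫ :=
              Finset.sum_congr rfl fun i _ => hinner i (Δ (e i))
          _ = ∫ t in (0:ℝ)..1, ∑ i ∈ s, ⟪Δ (e i), h t (e i)⟫ :=
              (intervalIntegral.integral_finset_sum fun i _ => hF i).symm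
      have hptb : ∀ t ∈ Set.Icc (0:ℝ) 1,
          ∑ i ∈ s, ⟪Δ (e i), h t (e i)⟫ ≤ Real.sqrt W * K := by
        intro t ht
        have h1 : ∑ i ∈ s, ⟪Δ (e i), h t (e i)⟫ ≤ ∑ i ∈ s, ‖Δ (e i)‖ * ‖h t (e i)‖ :=
          Finset.sum_le_sum fun i _ => real_inner_le_norm _ _
        have h2 : (∑ i ∈ s, ‖Δ (e i)‖ * ‖h t (e i)‖) ^ 2 ≤ W * ∑ i ∈ s, ‖h t (e i)‖ ^ 2 :=
          Finset.sum_mul_sq_le_sq_mul_sq s _ _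
        have h3 : ∑ i ∈ s, ‖Δ (e i)‖ * ‖h t (e i)‖ ≤
            Real.sqrt W * Real.sqrt (∑ i ∈ s, ‖h t (e i)‖ ^ 2) := by
          rw [← Real.sqrt_mul hW0]
          calc ∑ i ∈ s, ‖Δ (e i)‖ * ‖h t (e i)‖ ≤ |∑ i ∈ s, ‖Δ (e i)‖ * ‖h t (e i)‖| :=
                le_abs_self _
            _ = Real.sqrt ((∑ i ∈ s, ‖Δ (e i)‖ * ‖h t (e i)‖) ^ 2) :=
                (Real.sqrt_sq_eq_abs _).symm
            _ ≤ Real.sqrt (W * ∑ i ∈ s, ‖h t (e i)‖ ^ 2) := Real.sqrt_le_sqrt h2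
        have h4 : Real.sqrt (∑ i ∈ s, ‖h t (e i)‖ ^ 2) ≤ K := by
          calc Real.sqrt (∑ i ∈ s, ‖h t (e i)‖ ^ 2) ≤ Real.sqrt (K ^ 2) :=
                Real.sqrt_le_sqrt (hb t ht s)
            _ = K := Real.sqrt_sq hK
        calc ∑ i ∈ s, ⟪Δ (e i), h t (e i)⟫
            ≤ Real.sqrt W * Real.sqrt (∑ i ∈ s, ‖h t (e i)‖ ^ 2) := h1.trans h3
          _ ≤ Real.sqrt W * K := mul_le_mul_of_nonneg_left h4 (Real.sqrt_nonneg _)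
      calc W = ∫ t in (0:ℝ)..1, ∑ i ∈ s, ⟪Δ (e i), h t (e i)⟫ := hintsum
        _ ≤ ∫ _t in (0:ℝ)..1, Real.sqrt W * K := by
            have hFsum : IntervalIntegrable
                (fun t => ∑ i ∈ s, ⟪Δ (e i), h t (e i)⟫) volume 0 1 := by
              have h5 := IntervalIntegrable.sum s fun i _ => hF i
              have h6 : (∑ i ∈ s, fun t => ⟪Δ (e i), h t (e i)⟫)
                  = fun t => ∑ i ∈ s, ⟪Δ (e i), h t (e i)⟫ := by
                funext t; simp
              rwa [h6] at h5
            exact intervalIntegral.integral_mono_on zero_le_one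
              hFsum intervalIntegrable_const hptb
        _ = Real.sqrt W * K := by simp
    nlinarith [Real.sqrt_nonneg W, Real.sq_sqrt hW0]
  exact ⟨summable_of_sum_le (fun i => sq_nonneg _) key,
    Summable.tsum_le_of_sum_le (summable_of_sum_le (fun i => sq_nonneg _) key) key⟩
lemma aux_comm_inverse {U A : H →L[ℝ] H} (h : IsUnit U) (hc : A * U = U * A) :
    A * Ring.inverse U = Ring.inverse U * A := by
  have h1 : Ring.inverse U * U = 1 := Ring.inverse_mul_cancel U h
  have h2 : U * Ring.inverse U = 1 := Ring.mul_inverse_cancel U h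
  calc A * Ring.inverse U
      = (Ring.inverse U * U) * (A * Ring.inverse U) := by rw [h1, one_mul]
    _ = Ring.inverse U * ((U * A) * Ring.inverse U) := by noncomm_ring
    _ = Ring.inverse U * ((A * U) * Ring.inverse U) := by rw [hc]
    _ = Ring.inverse U * A * (U * Ring.inverse U) := by noncomm_ring
    _ = Ring.inverse U * A := by rw [h2, mul_one]

lemma aux_comm_self (A : H →L[ℝ] H) (t : ℝ) :
    A * ((1 : H →L[ℝ] H) + t • A) = ((1 : H →L[ℝ] H) + t • A) * A := by
  simp [mul_add, add_mul, mul_smul_comm, smul_mul_assoc]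

lemma aux_key_id {A B : H →L[ℝ] H} {t : ℝ}
    (hU : IsUnit ((1 : H →L[ℝ] H) + t • A)) (hV : IsUnit ((1 : H →L[ℝ] H) + t • B)) :
    A * Ring.inverse ((1 : H →L[ℝ] H) + t • A) - B * Ring.inverse ((1 : H →L[ℝ] H) + t • B)
      = Ring.inverse ((1 : H →L[ℝ] H) + t • A) * (A - B) *
          Ring.inverse ((1 : H →L[ℝ] H) + t • B) := by
  set U : H →L[ℝ] H := (1 : H →L[ℝ] H) + t • A with hUdef
  set V : H →L[ℝ] H := (1 : H →L[ℝ] H) + t • B with hVdef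
  set u := Ring.inverse U with hudef
  set v := Ring.inverse V with hvdef
  have hAu : A * u = u * A := aux_comm_inverse hU (aux_comm_self A t)
  have huU : u * U = 1 := Ring.inverse_mul_cancel _ hU
  have hVv : V * v = 1 := Ring.mul_inverse_cancel _ hV
  have hmid : A * V - U * B = A - B := by
    rw [hUdef, hVdef]
    simp only [mul_add, add_mul, mul_one, one_mul, mul_smul_comm, smul_mul_assoc]
    abel
  have hmain : u * (A - B) * v = A * u - B * v := by
    rw [← hmid]
    calc u * (A * V - U * B) * v
        = u * A * (V * v) - (u * U) * (B * v) := by noncomm_ring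
      _ = u * A - B * v := by rw [hVv, huU, mul_one, one_mul]
      _ = A * u - B * v := by rw [hAu]
  exact hmain.symm

lemma aux_opLog_eq (A : H →L[ℝ] H) :
    opLog (1 + A) = ∫ t in (0:ℝ)..1, A * Ring.inverse ((1 : H →L[ℝ] H) + t • A) := by
  simp only [opLog, add_sub_cancel_left]

lemma aux_intInt {A : H →L[ℝ] H}
    (hunit : ∀ t ∈ Set.Icc (0:ℝ) 1, IsUnit ((1 : H →L[ℝ] H) + t • A)) (X : H →L[ℝ] H) :
    IntervalIntegrable (fun t : ℝ => X * Ring.inverse ((1 : H →L[ℝ] H) + t • A)) volume 0 1 := by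
  apply ContinuousOn.intervalIntegrable
  rw [Set.uIcc_of_le zero_le_one]
  exact continuousOn_const.mul (aux_continuousOn_inv hunit)

lemma aux_log_pointwise (e : HilbertBasis ι ℝ H) {A : H →L[ℝ] H}
    (hunit : ∀ t ∈ Set.Icc (0:ℝ) 1, IsUnit ((1 : H →L[ℝ] H) + t • A)) {c : ℝ}
    (hc : ∀ t ∈ Set.Icc (0:ℝ) 1, ‖Ring.inverse ((1 : H →L[ℝ] H) + t • A)‖ ≤ c) (i : ι) :
    ‖opLog (1 + A) (e i)‖ ≤ c * ‖A (e i)‖ := by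
  rw [aux_opLog_eq, ContinuousLinearMap.intervalIntegral_apply (aux_intInt hunit A)]
  have hbd : ∀ t ∈ Set.uIoc (0:ℝ) 1,
      ‖(A * Ring.inverse ((1 : H →L[ℝ] H) + t • A)) (e i)‖ ≤ c * ‖A (e i)‖ := by
    intro t ht
    rw [Set.uIoc_of_le zero_le_one] at ht
    have ht' : t ∈ Set.Icc (0:ℝ) 1 := ⟨le_of_lt ht.1, ht.2⟩
    rw [aux_comm_inverse (hunit t ht') (aux_comm_self A t), ContinuousLinearMap.mul_apply]
    calc ‖Ring.inverse ((1 : H →L[ℝ] H) + t • A) (A (e i))‖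
        ≤ ‖Ring.inverse ((1 : H →L[ℝ] H) + t • A)‖ * ‖A (e i)‖ :=
          ContinuousLinearMap.le_opNorm _ _
      _ ≤ c * ‖A (e i)‖ := mul_le_mul_of_nonneg_right (hc t ht') (norm_nonneg _)
  have := intervalIntegral.norm_integral_le_of_norm_le_const hbd
  simpa using this

lemma aux_hs_pointwise (e : HilbertBasis ι ℝ H) {S T : H →L[ℝ] H}
    (hT : Summable fun i => ‖T (e i)‖ ^ 2) {c : ℝ} (hc : 0 ≤ c)
    (h : ∀ i, ‖S (e i)‖ ≤ c * ‖T (e i)‖) :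
    Summable (fun i => ‖S (e i)‖ ^ 2) ∧ hsNorm e S ≤ c * hsNorm e T := by
  have hb : ∀ i, ‖S (e i)‖ ^ 2 ≤ c ^ 2 * ‖T (e i)‖ ^ 2 := fun i => by
    rw [← mul_pow]; exact pow_le_pow_left₀ (norm_nonneg _) (h i) 2
  have hsum := Summable.of_nonneg_of_le (fun i => sq_nonneg _) hb (hT.mul_left _)
  refine ⟨hsum, ?_⟩
  have h1 : ∑' i, ‖S (e i)‖ ^ 2 ≤ c ^ 2 * ∑' i, ‖T (e i)‖ ^ 2 := by
    rw [← tsum_mul_left]; exact Summable.tsum_le_tsum hb hsum (hT.mul_left _)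
  calc hsNorm e S = Real.sqrt (∑' i, ‖S (e i)‖ ^ 2) := rfl
    _ ≤ Real.sqrt (c ^ 2 * ∑' i, ‖T (e i)‖ ^ 2) := Real.sqrt_le_sqrt h1
    _ = c * hsNorm e T := by
        rw [Real.sqrt_mul (sq_nonneg c), Real.sqrt_sq hc]; rfl

lemma aux_trace_bound (e : HilbertBasis ι ℝ H) {S T : H →L[ℝ] H}
    (hS : Summable fun i => ‖S (e i)‖ ^ 2) (hT : Summable fun i => ‖T (e i)‖ ^ 2) :
    Summable (fun i => ⟪e i, (S * T) (e i)⟫) ∧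
      |opTrace e (S * T)| ≤ hsNorm e S * hsNorm e T := by
  obtain ⟨hS', hSeq⟩ := aux_hs_adjoint e hS
  have hid : ∀ i : ι, ⟪e i, (S * T) (e i)⟫
      = ⟪(ContinuousLinearMap.adjoint S) (e i), T (e i)⟫ := fun i => by
    rw [ContinuousLinearMap.mul_apply]
    exact (ContinuousLinearMap.adjoint_inner_left S (T (e i)) (e i)).symm
  have habs : ∀ i, |⟪e i, (S * T) (e i)⟫|
      ≤ ‖(ContinuousLinearMap.adjoint S) (e i)‖ * ‖T (e i)‖ := fun i => by
    rw [hid i]; exact abs_real_inner_le_norm _ _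
  obtain ⟨hprod, hcs⟩ := aux_tsum_cs (fun i => norm_nonneg _) (fun i => norm_nonneg _) hS' hT
  have hsumabs : Summable (fun i => |⟪e i, (S * T) (e i)⟫|) :=
    Summable.of_nonneg_of_le (fun i => abs_nonneg _) habs hprod
  have hsum : Summable (fun i => ⟪e i, (S * T) (e i)⟫) := hsumabs.of_abs
  refine ⟨hsum, ?_⟩
  calc |opTrace e (S * T)| = |∑' i, ⟪e i, (S * T) (e i)⟫| := rfl
    _ ≤ ∑' i, |⟪e i, (S * T) (e i)⟫| := by
        have := norm_tsum_le_tsum_norm (f := fun i => ⟪e i, (S * T) (e i)⟫)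
          (by simpa [Real.norm_eq_abs] using hsumabs)
        simpa [Real.norm_eq_abs] using this
    _ ≤ ∑' i, ‖(ContinuousLinearMap.adjoint S) (e i)‖ * ‖T (e i)‖ :=
        Summable.tsum_le_tsum habs hsumabs hprod
    _ ≤ Real.sqrt (∑' i, ‖(ContinuousLinearMap.adjoint S) (e i)‖ ^ 2) *
          Real.sqrt (∑' i, ‖T (e i)‖ ^ 2) := hcs
    _ = hsNorm e S * hsNorm e T := by rw [hSeq]; rfl

lemma aux_delta (e : HilbertBasis ι ℝ H) {A B : H →L[ℝ] H}
    (hABS : Summable fun i => ‖(A - B) (e i)‖ ^ 2)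
    (hunitA : ∀ t ∈ Set.Icc (0:ℝ) 1, IsUnit ((1 : H →L[ℝ] H) + t • A))
    (hunitB : ∀ t ∈ Set.Icc (0:ℝ) 1, IsUnit ((1 : H →L[ℝ] H) + t • B))
    {cA cB : ℝ}
    (hcA : ∀ t ∈ Set.Icc (0:ℝ) 1, ‖Ring.inverse ((1 : H →L[ℝ] H) + t • A)‖ ≤ cA)
    (hcB : ∀ t ∈ Set.Icc (0:ℝ) 1, ‖Ring.inverse ((1 : H →L[ℝ] H) + t • B)‖ ≤ cB)
    (hcA0 : 0 ≤ cA) (hcB0 : 0 ≤ cB) :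
    Summable (fun i => ‖(opLog (1 + A) - opLog (1 + B) : H →L[ℝ] H) (e i)‖ ^ 2) ∧
      hsNorm e (opLog (1 + A) - opLog (1 + B)) ≤ cA * cB * hsNorm e (A - B) := by
  set h : ℝ → H →L[ℝ] H := fun t =>
    Ring.inverse ((1 : H →L[ℝ] H) + t • A) * (A - B) *
      Ring.inverse ((1 : H →L[ℝ] H) + t • B) with hdef
  have hEq : opLog (1 + A) - opLog (1 + B) = ∫ t in (0:ℝ)..1, h t := by
    rw [aux_opLog_eq, aux_opLog_eq,
      ← intervalIntegral.integral_sub (aux_intInt hunitA A) (aux_intInt hunitB B)]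
    apply intervalIntegral.integral_congr
    intro t ht
    rw [Set.uIcc_of_le zero_le_one] at ht
    exact aux_key_id (hunitA t ht) (hunitB t ht)
  have hcont : ContinuousOn h (Set.Icc 0 1) :=
    ((aux_continuousOn_inv hunitA).mul continuousOn_const).mul (aux_continuousOn_inv hunitB)
  have hM0 : 0 ≤ hsNorm e (A - B) := Real.sqrt_nonneg _
  have hMsq : hsNorm e (A - B) ^ 2 = ∑' i, ‖(A - B) (e i)‖ ^ 2 :=
    Real.sq_sqrt (tsum_nonneg fun i => sq_nonneg _)
  have hK0 : 0 ≤ cA * cB * hsNorm e (A - B) :=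
    mul_nonneg (mul_nonneg hcA0 hcB0) hM0
  have hb : ∀ t ∈ Set.Icc (0:ℝ) 1, ∀ s : Finset ι,
      ∑ i ∈ s, ‖h t (e i)‖ ^ 2 ≤ (cA * cB * hsNorm e (A - B)) ^ 2 := by
    intro t ht s
    set v := Ring.inverse ((1 : H →L[ℝ] H) + t • B) with hvdef
    obtain ⟨hsumR, hboundR⟩ := aux_hs_mul_right e hABS v
    have hper : ∀ i : ι, ‖h t (e i)‖ ^ 2 ≤ cA ^ 2 * ‖((A - B) * v) (e i)‖ ^ 2 := by
      intro i
      have h1 : h t (e i)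
          = Ring.inverse ((1 : H →L[ℝ] H) + t • A) (((A - B) * v) (e i)) := rfl
      have h2 : ‖h t (e i)‖ ≤ cA * ‖((A - B) * v) (e i)‖ := by
        rw [h1]
        calc ‖Ring.inverse ((1 : H →L[ℝ] H) + t • A) (((A - B) * v) (e i))‖
            ≤ ‖Ring.inverse ((1 : H →L[ℝ] H) + t • A)‖ * ‖((A - B) * v) (e i)‖ :=
              ContinuousLinearMap.le_opNorm _ _
          _ ≤ cA * ‖((A - B) * v) (e i)‖ :=
              mul_le_mul_of_nonneg_right (hcA t ht) (norm_nonneg _)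
      rw [← mul_pow]
      exact pow_le_pow_left₀ (norm_nonneg _) h2 2
    have hv2 : ‖v‖ ^ 2 ≤ cB ^ 2 := pow_le_pow_left₀ (norm_nonneg _) (hcB t ht) 2
    calc ∑ i ∈ s, ‖h t (e i)‖ ^ 2
        ≤ ∑ i ∈ s, cA ^ 2 * ‖((A - B) * v) (e i)‖ ^ 2 := Finset.sum_le_sum fun i _ => hper i
      _ = cA ^ 2 * ∑ i ∈ s, ‖((A - B) * v) (e i)‖ ^ 2 := (Finset.mul_sum _ _ _).symm
      _ ≤ cA ^ 2 * ∑' i, ‖((A - B) * v) (e i)‖ ^ 2 :=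
          mul_le_mul_of_nonneg_left (Summable.sum_le_tsum s (fun i _ => sq_nonneg _) hsumR) (sq_nonneg _)
      _ ≤ cA ^ 2 * (‖v‖ ^ 2 * ∑' i, ‖(A - B) (e i)‖ ^ 2) :=
          mul_le_mul_of_nonneg_left hboundR (sq_nonneg _)
      _ ≤ cA ^ 2 * (cB ^ 2 * (hsNorm e (A - B)) ^ 2) := by
          rw [hMsq]
          exact mul_le_mul_of_nonneg_left
            (mul_le_mul_of_nonneg_right hv2 (tsum_nonneg fun i => sq_nonneg _)) (sq_nonneg _)
      _ = (cA * cB * hsNorm e (A - B)) ^ 2 := by ring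
  rw [hEq]
  obtain ⟨hsum, hbound⟩ := aux_integral_hs_bound e hcont hK0 hb
  refine ⟨hsum, ?_⟩
  calc hsNorm e (∫ t in (0:ℝ)..1, h t)
      = Real.sqrt (∑' i, ‖(∫ t in (0:ℝ)..1, h t) (e i)‖ ^ 2) := rfl
    _ ≤ Real.sqrt ((cA * cB * hsNorm e (A - B)) ^ 2) := Real.sqrt_le_sqrt hbound
    _ = cA * cB * hsNorm e (A - B) := Real.sqrt_sq hK0

end AuxStatement13

/-- Trace estimate for `tr[(Log(I + A))²] − tr[(Log(I + B))²]` in terms of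
Hilbert–Schmidt norms. -/
theorem statement13 {ι : Type*} [Countable ι] (e : HilbertBasis ι ℝ H)
    (A B : H →L[ℝ] H) (hAHS : IsHS e A) (hBHS : IsHS e B)
    (MA MB : ℝ) (hMA0 : 0 < MA) (hMB0 : 0 < MB)
    (hMA : ∀ x : H, MA * ‖x‖ ^ 2 ≤ ⟪x, ((1 : H →L[ℝ] H) + A) x⟫)
    (hMB : ∀ x : H, MB * ‖x‖ ^ 2 ≤ ⟪x, ((1 : H →L[ℝ] H) + B) x⟫)
    (cA cB : ℝ)
    (hcA : cA = ⨆ t : Set.Icc (0:ℝ) 1, ‖Ring.inverse ((1 : H →L[ℝ] H) + (t : ℝ) • A)‖)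
    (hcB : cB = ⨆ t : Set.Icc (0:ℝ) 1, ‖Ring.inverse ((1 : H →L[ℝ] H) + (t : ℝ) • B)‖) :
    |opTrace e (opLog (1 + A) ^ 2) - opTrace e (opLog (1 + B) ^ 2)| ≤
      cA * cB * hsNorm e (A - B) * (cA * hsNorm e A + cB * hsNorm e B) ∧
    ((IsSelfAdjoint A ∧ (∀ x : H, 0 ≤ ⟪x, A x⟫) ∧
      IsSelfAdjoint B ∧ (∀ x : H, 0 ≤ ⟪x, B x⟫)) →
      |opTrace e (opLog (1 + A) ^ 2) - opTrace e (opLog (1 + B) ^ 2)| ≤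
        hsNorm e (A - B) * (hsNorm e A + hsNorm e B)) := by
  classical
  have hA2 : Summable (fun i => ‖A (e i)‖ ^ 2) := hAHS
  have hB2 : Summable (fun i => ‖B (e i)‖ ^ 2) := hBHS
  have hmA : 0 < min 1 MA := lt_min one_pos hMA0
  have hmB : 0 < min 1 MB := lt_min one_pos hMB0
  have hunitA : ∀ t ∈ Set.Icc (0:ℝ) 1, IsUnit ((1 : H →L[ℝ] H) + t • A) :=
    fun t ht => aux_isUnit_of_coercive hmA (aux_coercive_t hMA ht)
  have hunitB : ∀ t ∈ Set.Icc (0:ℝ) 1, IsUnit ((1 : H →L[ℝ] H) + t • B) :=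
    fun t ht => aux_isUnit_of_coercive hmB (aux_coercive_t hMB ht)
  have hinvA : ∀ t ∈ Set.Icc (0:ℝ) 1,
      ‖Ring.inverse ((1 : H →L[ℝ] H) + t • A)‖ ≤ (min 1 MA)⁻¹ :=
    fun t ht => aux_inverse_norm_le hmA (aux_coercive_t hMA ht)
  have hinvB : ∀ t ∈ Set.Icc (0:ℝ) 1,
      ‖Ring.inverse ((1 : H →L[ℝ] H) + t • B)‖ ≤ (min 1 MB)⁻¹ :=
    fun t ht => aux_inverse_norm_le hmB (aux_coercive_t hMB ht)
  have hbddA : BddAbove (Set.range fun t : Set.Icc (0:ℝ) 1 =>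
      ‖Ring.inverse ((1 : H →L[ℝ] H) + (t : ℝ) • A)‖) := by
    refine ⟨(min 1 MA)⁻¹, ?_⟩
    rintro x ⟨t, rfl⟩
    exact hinvA t t.2
  have hbddB : BddAbove (Set.range fun t : Set.Icc (0:ℝ) 1 =>
      ‖Ring.inverse ((1 : H →L[ℝ] H) + (t : ℝ) • B)‖) := by
    refine ⟨(min 1 MB)⁻¹, ?_⟩
    rintro x ⟨t, rfl⟩
    exact hinvB t t.2
  have hcA' : ∀ t ∈ Set.Icc (0:ℝ) 1, ‖Ring.inverse ((1 : H →L[ℝ] H) + t • A)‖ ≤ cA := by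
    intro t ht
    rw [hcA]
    exact le_ciSup hbddA (⟨t, ht⟩ : Set.Icc (0:ℝ) 1)
  have hcB' : ∀ t ∈ Set.Icc (0:ℝ) 1, ‖Ring.inverse ((1 : H →L[ℝ] H) + t • B)‖ ≤ cB := by
    intro t ht
    rw [hcB]
    exact le_ciSup hbddB (⟨t, ht⟩ : Set.Icc (0:ℝ) 1)
  have hcA0 : 0 ≤ cA := le_trans (norm_nonneg _) (hcA' 0 ⟨le_refl 0, zero_le_one⟩)
  have hcB0 : 0 ≤ cB := le_trans (norm_nonneg _) (hcB' 0 ⟨le_refl 0, zero_le_one⟩)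
  have hABS : Summable (fun i => ‖(A - B) (e i)‖ ^ 2) := by
    refine Summable.of_nonneg_of_le (fun i => sq_nonneg _) (fun i => ?_)
      ((hA2.mul_left 2).add (hB2.mul_left 2))
    have h1 : ‖(A - B) (e i)‖ ≤ ‖A (e i)‖ + ‖B (e i)‖ := by
      rw [ContinuousLinearMap.sub_apply]; exact norm_sub_le _ _
    nlinarith [norm_nonneg (A (e i)), norm_nonneg (B (e i)), norm_nonneg ((A - B) (e i)),
      sq_nonneg (‖A (e i)‖ - ‖B (e i)‖)]
  obtain ⟨hLAsum, hLAb⟩ := aux_hs_pointwise e hA2 hcA0 (aux_log_pointwise e hunitA hcA')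
  obtain ⟨hLBsum, hLBb⟩ := aux_hs_pointwise e hB2 hcB0 (aux_log_pointwise e hunitB hcB')
  obtain ⟨hDsum, hDnorm⟩ := aux_delta e hABS hunitA hunitB hcA' hcB' hcA0 hcB0
  set LA := opLog (1 + A) with hLAdef
  set LB := opLog (1 + B) with hLBdef
  obtain ⟨tb1s, tb1⟩ := aux_trace_bound e hLAsum hDsum
  obtain ⟨tb2s, tb2⟩ := aux_trace_bound e hDsum hLBsum
  obtain ⟨tb3s, -⟩ := aux_trace_bound e hLAsum hLAsum
  obtain ⟨tb4s, -⟩ := aux_trace_bound e hLBsum hLBsum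
  have hopid : ∀ i : ι, ⟪e i, (LA * LA) (e i)⟫ - ⟪e i, (LB * LB) (e i)⟫
      = ⟪e i, (LA * (LA - LB)) (e i)⟫ + ⟪e i, ((LA - LB) * LB) (e i)⟫ := by
    intro i
    have hop : LA * LA - LB * LB = LA * (LA - LB) + (LA - LB) * LB := by noncomm_ring
    have h2 := congrArg (fun X : H →L[ℝ] H => ⟪e i, X (e i)⟫) hop
    simp only [ContinuousLinearMap.sub_apply, ContinuousLinearMap.add_apply,
      inner_sub_right, inner_add_right] at h2
    exact h2
  have htr : opTrace e (LA ^ 2) - opTrace e (LB ^ 2)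
      = opTrace e (LA * (LA - LB)) + opTrace e ((LA - LB) * LB) := by
    have hsq : ∀ X : H →L[ℝ] H, X ^ 2 = X * X := fun X => sq X
    rw [hsq, hsq]
    calc opTrace e (LA * LA) - opTrace e (LB * LB)
        = ∑' i, (⟪e i, (LA * LA) (e i)⟫ - ⟪e i, (LB * LB) (e i)⟫) := (Summable.tsum_sub tb3s tb4s).symm
      _ = ∑' i, (⟪e i, (LA * (LA - LB)) (e i)⟫ + ⟪e i, ((LA - LB) * LB) (e i)⟫) :=
          tsum_congr hopid
      _ = opTrace e (LA * (LA - LB)) + opTrace e ((LA - LB) * LB) := Summable.tsum_add tb1s tb2s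
  have habs : |opTrace e (LA ^ 2) - opTrace e (LB ^ 2)|
      ≤ hsNorm e LA * hsNorm e (LA - LB) + hsNorm e (LA - LB) * hsNorm e LB := by
    rw [htr]
    exact (abs_add_le _ _).trans (add_le_add tb1 tb2)
  have hsA0 : 0 ≤ hsNorm e A := Real.sqrt_nonneg _
  have hsB0 : 0 ≤ hsNorm e B := Real.sqrt_nonneg _
  have hsAB0 : 0 ≤ hsNorm e (A - B) := Real.sqrt_nonneg _
  have hK0 : 0 ≤ cA * cB * hsNorm e (A - B) := mul_nonneg (mul_nonneg hcA0 hcB0) hsAB0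
  have hfinal1 : |opTrace e (LA ^ 2) - opTrace e (LB ^ 2)|
      ≤ cA * cB * hsNorm e (A - B) * (cA * hsNorm e A + cB * hsNorm e B) := by
    calc |opTrace e (LA ^ 2) - opTrace e (LB ^ 2)|
        ≤ hsNorm e LA * hsNorm e (LA - LB) + hsNorm e (LA - LB) * hsNorm e LB := habs
      _ = hsNorm e (LA - LB) * (hsNorm e LA + hsNorm e LB) := by ring
      _ ≤ cA * cB * hsNorm e (A - B) * (cA * hsNorm e A + cB * hsNorm e B) :=
          mul_le_mul hDnorm (add_le_add hLAb hLBb)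
            (add_nonneg (Real.sqrt_nonneg _) (Real.sqrt_nonneg _)) hK0
  refine ⟨hfinal1, ?_⟩
  rintro ⟨-, hposA, -, hposB⟩
  have hone : ∀ (C : H →L[ℝ] H), (∀ x : H, 0 ≤ ⟪x, C x⟫) →
      ∀ t ∈ Set.Icc (0:ℝ) 1, ‖Ring.inverse ((1 : H →L[ℝ] H) + t • C)‖ ≤ 1 := by
    intro C hpos t ht
    have hco : ∀ x : H, (1:ℝ) * ‖x‖ ^ 2 ≤ ⟪x, ((1 : H →L[ℝ] H) + t • C) x⟫ := by
      intro x
      have h1 : ⟪x, ((1 : H →L[ℝ] H) + t • C) x⟫ = ‖x‖ ^ 2 + t * ⟪x, C x⟫ := by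
        simp [ContinuousLinearMap.add_apply, ContinuousLinearMap.smul_apply,
          ContinuousLinearMap.one_apply, inner_add_right, real_inner_smul_right,
          real_inner_self_eq_norm_sq]
      rw [h1, one_mul]
      have := mul_nonneg ht.1 (hpos x)
      linarith
    have := aux_inverse_norm_le one_pos hco
    simpa using this
  haveI : Nonempty (Set.Icc (0:ℝ) 1) := ⟨⟨0, le_refl 0, zero_le_one⟩⟩
  have hcA1 : cA ≤ 1 := by
    rw [hcA]; exact ciSup_le fun t => hone A hposA t t.2
  have hcB1 : cB ≤ 1 := by
    rw [hcB]; exact ciSup_le fun t => hone B hposB t t.2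
  refine hfinal1.trans ?_
  have h1 : cA * hsNorm e A + cB * hsNorm e B ≤ hsNorm e A + hsNorm e B :=
    add_le_add (mul_le_of_le_one_left hsA0 hcA1) (mul_le_of_le_one_left hsB0 hcB1)
  have h2 : cA * cB ≤ 1 := by nlinarith
  nlinarith [mul_le_mul_of_nonneg_left h1 hK0,
    mul_le_mul_of_nonneg_right h2 (mul_nonneg hsAB0 (add_nonneg hsA0 hsB0)),
    mul_nonneg hsAB0 (add_nonneg hsA0 hsB0)]

end
end
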